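/- arXiv:1902.07063 — 2 statements merged into one kernel-verified Lean document; each statement's English description precedes it below -/
import Mathlib

section
/- Let C be an algebraic circuit and let u, v be gates of C. Define the gate quotient [u:v] inductively: [u:v] = 1 if u = v; [u:v] = [u_1:v] + [u_2:v] if u = u_1 + u_2; [u:v] = [u_L]·[u_R:v] if u = u_L × u_R; and [u:v] = 0 if v does not appear in the subcircuit rooted at u. Then [u:v] equals the sum of the values of all v-snipped proof-trees rooted at u. -/
/-- A gate of an algebraic circuit: a variable leaf, a constant leaf, a fan-in-two
addition gate, or a fan-in-two multiplication gate (children given by gate indices). -/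
inductive GateDef (F : Type) (n : ℕ) where
  | var (i : Fin n)
  | const (a : F)
  | add (l r : ℕ)
  | mul (l r : ℕ)

/-- An algebraic circuit over the field `F` in variables `x_0, ..., x_{n-1}`: a DAG whose
gates are indexed by natural numbers, children of a gate having strictly smaller index. -/
structure Circuit (F : Type) (n : ℕ) where
  size : ℕ
  gate : ℕ → GateDef F n
  addAcyclic : ∀ g l r, gate g = GateDef.add l r → l < g ∧ r < g
  mulAcyclic : ∀ g l r, gate g = GateDef.mul l r → l < g ∧ r < g

namespace Circuit

variable {F : Type} [Field F] {n : ℕ}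

/-- `[u]`, the polynomial computed at gate `u`. -/
noncomputable def eval (Γ : Circuit F n) : ℕ → MvPolynomial (Fin n) F
  | u => match h : Γ.gate u with
    | GateDef.var i => MvPolynomial.X i
    | GateDef.const a => MvPolynomial.C a
    | GateDef.add l r =>
        have := Γ.addAcyclic u l r h
        Γ.eval l + Γ.eval r
    | GateDef.mul l r =>
        have := Γ.mulAcyclic u l r h
        Γ.eval l * Γ.eval r
termination_by u => u
decreasing_by
  · exact this.1
  · exact this.2
  · exact this.1
  · exact this.2

/-- The multiset of values of all proof-trees rooted at `u`: a proof-tree contains both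
children of each product gate it contains and exactly one child of each addition gate it
contains, and its value is the monomial it computes. -/
noncomputable def ptVals (Γ : Circuit F n) : ℕ → Multiset (MvPolynomial (Fin n) F)
  | u => match h : Γ.gate u with
    | GateDef.var i => {MvPolynomial.X i}
    | GateDef.const a => {MvPolynomial.C a}
    | GateDef.add l r =>
        have := Γ.addAcyclic u l r h
        Γ.ptVals l + Γ.ptVals r
    | GateDef.mul l r =>
        have := Γ.mulAcyclic u l r h
        ((Γ.ptVals l).product (Γ.ptVals r)).map (fun p => p.1 * p.2)
termination_by u => u
decreasing_by
  · exact this.1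
  · exact this.2
  · exact this.1
  · exact this.2

/-- The gate quotient `[u : v]`. -/
noncomputable def quot (Γ : Circuit F n) : ℕ → ℕ → MvPolynomial (Fin n) F
  | u, v =>
    if u = v then 1
    else match h : Γ.gate u with
      | GateDef.var _ => 0
      | GateDef.const _ => 0
      | GateDef.add l r =>
          have := Γ.addAcyclic u l r h
          Γ.quot l v + Γ.quot r v
      | GateDef.mul l r =>
          have := Γ.mulAcyclic u l r h
          Γ.eval l * Γ.quot r v
termination_by u v => u
decreasing_by
  · exact this.1
  · exact this.2
  · exact this.2

/-- The multiset of values of all `v`-snipped proof-trees rooted at `u`: proof-trees with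
`v` on their rightmost path, with that occurrence of `v` replaced by a leaf labelled `1`. -/
noncomputable def sptVals (Γ : Circuit F n) : ℕ → ℕ → Multiset (MvPolynomial (Fin n) F)
  | u, v =>
    if u = v then {1}
    else match h : Γ.gate u with
      | GateDef.var _ => 0
      | GateDef.const _ => 0
      | GateDef.add l r =>
          have := Γ.addAcyclic u l r h
          Γ.sptVals l v + Γ.sptVals r v
      | GateDef.mul l r =>
          have := Γ.mulAcyclic u l r h
          ((Γ.ptVals l).product (Γ.sptVals r v)).map (fun p => p.1 * p.2)
termination_by u v => u
decreasing_by
  · exact this.1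
  · exact this.2
  · exact this.2

/-- The multiset of individual-degree vectors of all proof-trees rooted at `u`. -/
def ptDegs (Γ : Circuit F n) : ℕ → Multiset (Fin n → ℕ)
  | u => match h : Γ.gate u with
    | GateDef.var i => {fun j => if j = i then 1 else 0}
    | GateDef.const _ => {(0 : Fin n → ℕ)}
    | GateDef.add l r =>
        have := Γ.addAcyclic u l r h
        Γ.ptDegs l + Γ.ptDegs r
    | GateDef.mul l r =>
        have := Γ.mulAcyclic u l r h
        ((Γ.ptDegs l).product (Γ.ptDegs r)).map (fun p => p.1 + p.2)
termination_by u => u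
decreasing_by
  · exact this.1
  · exact this.2
  · exact this.1
  · exact this.2

/-- The multiset of individual-degree vectors of all `v`-snipped proof-trees rooted at `u`. -/
def sptDegs (Γ : Circuit F n) : ℕ → ℕ → Multiset (Fin n → ℕ)
  | u, v =>
    if u = v then {(0 : Fin n → ℕ)}
    else match h : Γ.gate u with
      | GateDef.var _ => 0
      | GateDef.const _ => 0
      | GateDef.add l r =>
          have := Γ.addAcyclic u l r h
          Γ.sptDegs l v + Γ.sptDegs r v
      | GateDef.mul l r =>
          have := Γ.mulAcyclic u l r h
          ((Γ.ptDegs l).product (Γ.sptDegs r v)).map (fun p => p.1 + p.2)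
termination_by u v => u
decreasing_by
  · exact this.1
  · exact this.2
  · exact this.2

/-- `Var(u)`: the coordinatewise maximum individual-degree vector over all proof-trees
rooted at `u`. -/
def varV (Γ : Circuit F n) (u : ℕ) : Fin n → ℕ :=
  fun i => ((Γ.ptDegs u).map (fun d => d i)).sup

/-- `Var(u : v)`: the coordinatewise maximum individual-degree vector over all
`v`-snipped proof-trees rooted at `u`. -/
def varQ (Γ : Circuit F n) (u v : ℕ) : Fin n → ℕ :=
  fun i => ((Γ.sptDegs u v).map (fun d => d i)).sup

/-- `|d|`: the sum of the coordinates of a degree vector. -/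
def tot {n : ℕ} (d : Fin n → ℕ) : ℕ := ∑ i : Fin n, d i

end Circuit


lemma Multiset.sum_map_mul_product {M : Type*} [NonUnitalNonAssocSemiring M]
    (s t : Multiset M) :
    ((s.product t).map (fun p => p.1 * p.2)).sum = s.sum * t.sum := by
  induction s using Multiset.induction with
  | empty => simp [Multiset.product]
  | cons a s ih =>
      simp only [Multiset.product, Multiset.cons_bind, Multiset.map_add,
        Multiset.map_map, Multiset.sum_add, Multiset.sum_cons, add_mul] at *
      rw [ih]
      congr 1
      simpa using Multiset.sum_map_mul_left (s := t) (a := a) (f := id)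

lemma Circuit.eval_eq_ptVals_sum {F : Type} [Field F] {n : ℕ} (Γ : Circuit F n) (u : ℕ) :
    Γ.eval u = (Γ.ptVals u).sum := by
  induction u using Nat.strong_induction_on with
  | _ u ih =>
    rw [Circuit.eval, Circuit.ptVals]
    split <;> rename_i h <;> simp_all
    · rw [ih _ (Γ.addAcyclic _ _ _ h).1, ih _ (Γ.addAcyclic _ _ _ h).2]
    · rw [ih _ (Γ.mulAcyclic _ _ _ h).1, ih _ (Γ.mulAcyclic _ _ _ h).2,
        Multiset.sum_map_mul_product]

/-- The gate quotient `[u : v]` equals the sum of the values of all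
`v`-snipped proof-trees rooted at `u`. -/
theorem Circuit.quot_eq_sum_snipped_proofTree_values
    {F : Type} [Field F] {n : ℕ} (Γ : Circuit F n) (u v : ℕ) :
    Γ.quot u v = (Γ.sptVals u v).sum := by
  induction u using Nat.strong_induction_on with
  | _ u ih =>
    rw [Circuit.quot, Circuit.sptVals]
    by_cases huv : u = v
    · simp [huv]
    · simp only [huv, if_false]
      split <;> rename_i h
      · simp
      · simp
      · rw [ih _ (Γ.addAcyclic _ _ _ h).1, ih _ (Γ.addAcyclic _ _ _ h).2]
        simp
      · rw [ih _ (Γ.mulAcyclic _ _ _ h).2, Circuit.eval_eq_ptVals_sum,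
          Multiset.sum_map_mul_product]
end

section
/- Let C be an algebraic circuit with gates u and w, and suppose some proof-tree rooted at u contains w on its rightmost path. Then Var(u:w) + Var(w) ≤ Var(u) coordinatewise, where Var(u) ∈ ℕ^n is the vector whose i-th entry is the maximum x_i-degree over all proof-trees rooted at u, and Var(u:w) is the analogous vector over all w-snipped proof-trees rooted at u. -/
/-!
Grafting a proof-tree rooted at `w` onto the snipped leaf of a `w`-snipped proof-tree rooted
at `u` yields a proof-tree rooted at `u` whose degree vector is the sum of the two. Choosing,
for a coordinate `i`, a snipped tree and a tree at `w` that attain the maxima `Var(u : w)ᵢ`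
and `Var(w)ᵢ` (both sets are nonempty), the grafted tree shows that their sum is at most
`Var(u)ᵢ`.
-/

theorem Multiset.exists_mem_sup_map_eq {α β : Type*} [LinearOrder β] [OrderBot β]
    (f : α → β) {s : Multiset α} (hs : s ≠ 0) : ∃ a ∈ s, (s.map f).sup = f a := by
  obtain ⟨a, ha, hmax⟩ := s.exists_max_image f hs
  refine ⟨a, ha, le_antisymm ?_ (Multiset.le_sup (Multiset.mem_map_of_mem f ha))⟩
  simpa only [Multiset.sup_le, Multiset.forall_mem_map_iff] using hmax

namespace Circuit

variable {F : Type} {n : ℕ} (Γ : Circuit F n)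

theorem ptDegs_of_add {u l r : ℕ} (h : Γ.gate u = GateDef.add l r) :
    Γ.ptDegs u = Γ.ptDegs l + Γ.ptDegs r := by
  rw [ptDegs]
  split <;> simp_all

theorem ptDegs_of_mul {u l r : ℕ} (h : Γ.gate u = GateDef.mul l r) :
    Γ.ptDegs u = (Γ.ptDegs l ×ˢ Γ.ptDegs r).map (fun p => p.1 + p.2) := by
  rw [ptDegs]
  split <;> simp_all
  rfl

theorem ptDegs_ne_zero (u : ℕ) : Γ.ptDegs u ≠ 0 := by
  induction u using Nat.strong_induction_on with
  | _ u ih =>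
    rw [ptDegs]
    split
    case h_1 | h_2 => simp
    case h_3 l r hg =>
      simp [ih l (Γ.addAcyclic u l r hg).1]
    case h_4 l r hg =>
      obtain ⟨hl, hr⟩ := Γ.mulAcyclic u l r hg
      rw [Ne, ← Multiset.card_eq_zero, Multiset.card_map]
      exact (Multiset.card_product _ _).trans_ne
        (Nat.mul_ne_zero (mt Multiset.card_eq_zero.1 (ih l hl)) (mt Multiset.card_eq_zero.1 (ih r hr)))

theorem add_mem_ptDegs_of_mem_sptDegs {w : ℕ} (u : ℕ) {d e : Fin n → ℕ}
    (hd : d ∈ Γ.sptDegs u w) (he : e ∈ Γ.ptDegs w) : d + e ∈ Γ.ptDegs u := by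
  induction u using Nat.strong_induction_on generalizing d with
  | _ u ih =>
    rw [sptDegs] at hd
    split at hd
    case isTrue huw =>
      subst huw
      simpa [Multiset.mem_singleton.1 hd] using he
    case isFalse =>
      split at hd
      case h_1 | h_2 => simp at hd
      case h_3 l r hg =>
        obtain ⟨hl, hr⟩ := Γ.addAcyclic u l r hg
        rw [Γ.ptDegs_of_add hg, Multiset.mem_add]
        exact (Multiset.mem_add.1 hd).imp (ih l hl) (ih r hr)
      case h_4 l r hg =>
        obtain ⟨p, q, hpq, rfl⟩ := by simpa only [Multiset.mem_map, Prod.exists] using hd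
        obtain ⟨hp, hq⟩ := Multiset.mem_product.1 hpq
        rw [Γ.ptDegs_of_mul hg, add_assoc]
        exact Multiset.mem_map.2
          ⟨(p, q + e), Multiset.mem_product.2 ⟨hp, ih r (Γ.mulAcyclic u l r hg).2 hq⟩, rfl⟩

theorem le_varV {u : ℕ} {d : Fin n → ℕ} (hd : d ∈ Γ.ptDegs u) (i : Fin n) :
    d i ≤ Γ.varV u i :=
  Multiset.le_sup (Multiset.mem_map_of_mem (fun d => d i) hd)

end Circuit

theorem Circuit.varQ_add_varV_le_varV_general
    {F : Type} {n : ℕ} (Γ : Circuit F n) (u w : ℕ)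
    (h : Γ.sptDegs u w ≠ 0) :
    ∀ i : Fin n, Γ.varQ u w i + Γ.varV w i ≤ Γ.varV u i := by
  intro i
  obtain ⟨d, hd, hdmax⟩ := Multiset.exists_mem_sup_map_eq (fun d => d i) h
  obtain ⟨e, he, hemax⟩ := Multiset.exists_mem_sup_map_eq (fun d => d i) (Γ.ptDegs_ne_zero w)
  calc Γ.varQ u w i + Γ.varV w i = (d + e) i := by
        rw [varQ, varV, hdmax, hemax, Pi.add_apply]
    _ ≤ Γ.varV u i := Γ.le_varV (Γ.add_mem_ptDegs_of_mem_sptDegs u hd he) i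

/-- If some proof-tree rooted at `u` contains `w` on its rightmost path
(equivalently, there exists a `w`-snipped proof-tree rooted at `u`), then
`Var(u : w) + Var(w) ≤ Var(u)` coordinatewise. -/
theorem Circuit.varQ_add_varV_le_varV
    {F : Type} [Field F] {n : ℕ} (Γ : Circuit F n) (u w : ℕ)
    (h : Γ.sptDegs u w ≠ 0) :
    ∀ i : Fin n, Γ.varQ u w i + Γ.varV w i ≤ Γ.varV u i :=
  Circuit.varQ_add_varV_le_varV_general Γ u w h
end
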